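/- arXiv:1802.01608 — 3 statements merged into one kernel-verified Lean document; each statement's English description precedes it below -/
import Mathlib

section
/- For a linear ordering U of V(G) given as u_1, u_2, ..., u_n and its cyclic rotation U' given as u_2, u_3, ..., u_n, u_1, the maximum length of a U-monotonic cycle equals the maximum length of a U'-monotonic cycle. -/
open SimpleGraph

/-- A monotonic cycle with respect to an ordering relation `lt`:
a nonempty list of distinct vertices, strictly increasing w.r.t. `lt`,
and if it has length at least 2, consecutive vertices are adjacent and
the last vertex is adjacent to the first. -/
def MonoCycle {V : Type*} (G : SimpleGraph V) (lt : V → V → Prop) (l : List V) : Prop :=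
  l ≠ [] ∧ l.Nodup ∧ l.Chain' lt ∧
    (2 ≤ l.length → l.Chain' G.Adj ∧
      ∀ a b, l.head? = some a → l.getLast? = some b → G.Adj b a)

/-- The maximum length of a monotonic cycle for the ordering relation `lt`. -/
noncomputable def maxCycleLen {V : Type*} (G : SimpleGraph V) (lt : V → V → Prop) : ℕ :=
  sSup {m | ∃ l : List V, MonoCycle G lt l ∧ l.length = m}

/-- The circular altitude of a graph: the minimum over all linear orderings
(injections of the vertex set into `ℕ`) of the maximum length of a monotonic cycle. -/
noncomputable def circAlt {V : Type*} (G : SimpleGraph V) : ℕ :=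
  sInf {n | ∃ f : V → ℕ, Function.Injective f ∧
    maxCycleLen G (fun a b => f a < f b) = n}


/-! A monotonic cycle through the first vertex `u₁` must start at `u₁`; moving it to the end of
the list gives a cyclic shift, which is again a cycle of the same length and is monotonic for the
rotated ordering, where `u₁` is last. A cycle avoiding `u₁` is monotonic for both orderings, since
they agree away from `u₁`. Reversing lists and orderings gives the converse. -/

theorem Cycle.chain_coe_iff {α : Type*} (R : α → α → Prop) (l : List α) :
    Cycle.Chain R (l : Cycle α) ↔
      l.IsChain R ∧ ∀ a b, l.head? = some a → l.getLast? = some b → R b a := by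
  cases l with
  | nil => simp
  | cons a t =>
    rw [Cycle.chain_coe_cons, ← List.cons_append, List.isChain_append]
    simp [List.getLast?_eq_some_getLast]

section MonoCycle

variable {V : Type*} {G : SimpleGraph V} {lt lt' : V → V → Prop}

theorem monoCycle_iff_cycleChain {l : List V} :
    MonoCycle G lt l ↔
      l ≠ [] ∧ l.Nodup ∧ l.IsChain lt ∧ (2 ≤ l.length → Cycle.Chain G.Adj (l : Cycle V)) := by
  simp only [MonoCycle, Cycle.chain_coe_iff]
  rfl

theorem MonoCycle.of_isRotated {l l' : List V} (h : MonoCycle G lt l) (hr : l ~r l')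
    (hl' : l'.IsChain lt') : MonoCycle G lt' l' := by
  rw [monoCycle_iff_cycleChain] at h ⊢
  obtain ⟨hne, hnd, -, hcyc⟩ := h
  refine ⟨?_, hr.nodup_iff.1 hnd, hl', ?_⟩
  · rintro rfl
    exact hne (List.isRotated_nil_iff.1 hr)
  · rw [← hr.perm.length_eq, ← Cycle.coe_eq_coe.2 hr]
    exact hcyc

end MonoCycle

/-- `lt'` is `lt` with its least element `v₀` moved to the top, as happens to the first vertex
when a linear ordering is rotated. -/
structure MovesToTop {V : Type*} (lt lt' : V → V → Prop) (v₀ : V) : Prop where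
  bot_lt : ∀ v, v ≠ v₀ → lt v₀ v
  not_lt_bot : ∀ v, ¬ lt v v₀
  lt_top : ∀ v, v ≠ v₀ → lt' v v₀
  not_top_lt : ∀ v, ¬ lt' v₀ v
  iff_of_ne : ∀ a b, a ≠ v₀ → b ≠ v₀ → (lt a b ↔ lt' a b)

namespace MovesToTop

variable {V : Type*} {lt lt' : V → V → Prop} {v₀ : V}

theorem flip (h : MovesToTop lt lt' v₀) : MovesToTop (flip lt') (flip lt) v₀ where
  bot_lt := h.lt_top
  not_lt_bot := h.not_top_lt
  lt_top := h.bot_lt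
  not_top_lt := h.not_lt_bot
  iff_of_ne a b ha hb := (h.iff_of_ne b a hb ha).symm

theorem comap {W : Type*} (h : MovesToTop lt lt' v₀) (f : W ≃ V) :
    MovesToTop (fun a b => lt (f a) (f b)) (fun a b => lt' (f a) (f b)) (f.symm v₀) where
  bot_lt v hv := by simpa using h.bot_lt (f v) (by simpa [Equiv.eq_symm_apply] using hv)
  not_lt_bot v := by simpa using h.not_lt_bot (f v)
  lt_top v hv := by simpa using h.lt_top (f v) (by simpa [Equiv.eq_symm_apply] using hv)
  not_top_lt v := by simpa using h.not_top_lt (f v)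
  iff_of_ne a b ha hb :=
    h.iff_of_ne (f a) (f b) (by simpa [Equiv.eq_symm_apply] using ha)
      (by simpa [Equiv.eq_symm_apply] using hb)

theorem exists_isRotated_pairwise_of_pairwise (h : MovesToTop lt lt' v₀) {l : List V}
    (hl : l.Pairwise lt) (hnd : l.Nodup) : ∃ l', l ~r l' ∧ l'.Pairwise lt' := by
  by_cases hv : v₀ ∈ l
  · obtain ⟨a, t, rfl⟩ := List.exists_cons_of_ne_nil (List.ne_nil_of_mem hv)
    rw [List.pairwise_cons] at hl
    rw [List.nodup_cons] at hnd
    have ha : a = v₀ := by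
      rcases List.mem_cons.1 hv with rfl | hvt
      · rfl
      · exact absurd (hl.1 v₀ hvt) (h.not_lt_bot a)
    subst ha
    have hne : ∀ x ∈ t, x ≠ a := fun x hx hxa => hnd.1 (hxa ▸ hx)
    refine ⟨t ++ [a], List.IsRotated.cons_append_singleton, List.pairwise_append.2 ⟨?_, ?_, ?_⟩⟩
    · exact hl.2.imp_of_mem fun hx hy => (h.iff_of_ne _ _ (hne _ hx) (hne _ hy)).1
    · exact List.pairwise_singleton _ _
    · rintro x hx y hy
      rw [List.mem_singleton.1 hy]
      exact h.lt_top x (hne x hx)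
  · have hne : ∀ x ∈ l, x ≠ v₀ := fun x hx hxv => hv (hxv ▸ hx)
    exact ⟨l, List.IsRotated.refl l,
      hl.imp_of_mem fun hx hy => (h.iff_of_ne _ _ (hne _ hx) (hne _ hy)).1⟩

theorem exists_isRotated_pairwise_of_pairwise' (h : MovesToTop lt lt' v₀) {l : List V}
    (hl : l.Pairwise lt') (hnd : l.Nodup) : ∃ l', l ~r l' ∧ l'.Pairwise lt := by
  obtain ⟨l', hr, hl'⟩ := h.flip.exists_isRotated_pairwise_of_pairwise
    (List.pairwise_reverse.2 hl) (List.nodup_reverse.2 hnd)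
  exact ⟨l'.reverse, by simpa using hr.reverse, List.pairwise_reverse.2 hl'⟩

end MovesToTop

theorem monoCycle_lengths_subset {V : Type*} (G : SimpleGraph V) {lt lt' : V → V → Prop}
    [IsTrans V lt] (H : ∀ l : List V, l.Pairwise lt → l.Nodup → ∃ l', l ~r l' ∧ l'.Pairwise lt') :
    {m | ∃ l : List V, MonoCycle G lt l ∧ l.length = m} ⊆
      {m | ∃ l : List V, MonoCycle G lt' l ∧ l.length = m} := by
  rintro _ ⟨l, hl, rfl⟩
  obtain ⟨l', hr, hl'⟩ := H l (List.isChain_iff_pairwise.1 hl.2.2.1) hl.2.1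
  exact ⟨l', hl.of_isRotated hr hl'.isChain, hr.perm.length_eq.symm⟩

theorem MovesToTop.maxCycleLen_eq {V : Type*} (G : SimpleGraph V) {lt lt' : V → V → Prop}
    [IsTrans V lt] [IsTrans V lt'] {v₀ : V} (h : MovesToTop lt lt' v₀) :
    maxCycleLen G lt = maxCycleLen G lt' :=
  congrArg sSup <|
    (monoCycle_lengths_subset G fun _ => h.exists_isRotated_pairwise_of_pairwise).antisymm
      (monoCycle_lengths_subset G fun _ => h.exists_isRotated_pairwise_of_pairwise')

theorem movesToTop_finRotate (m : ℕ) :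
    MovesToTop (fun i j : Fin (m + 1) => (i : ℕ) < j)
      (fun i j => ((finRotate (m + 1)).symm i : ℕ) < (finRotate (m + 1)).symm j) 0 where
  bot_lt i hi := Fin.pos_iff_ne_zero.2 hi
  not_lt_bot i := Nat.not_lt_zero _
  lt_top i hi := by
    rw [coe_finRotate_symm_of_ne_zero hi, finRotate_symm_apply, zero_sub, Fin.coe_neg_one]
    omega
  not_top_lt i := by
    simp only [finRotate_symm_apply, zero_sub, Fin.coe_neg_one, not_lt]
    exact Fin.is_le _
  iff_of_ne i j hi hj := by
    rw [coe_finRotate_symm_of_ne_zero hi, coe_finRotate_symm_of_ne_zero hj]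
    have := Fin.val_ne_zero_iff.2 hi
    have := Fin.val_ne_zero_iff.2 hj
    omega

theorem maxCycleLen_rotate_general {V : Type*} (G : SimpleGraph V) (n : ℕ) (e : Fin n ≃ V) :
    maxCycleLen G (fun a b => ((e.symm a : Fin n) : ℕ) < ((e.symm b : Fin n) : ℕ)) =
    maxCycleLen G (fun a b => ((((finRotate n).trans e).symm a : Fin n) : ℕ) <
      ((((finRotate n).trans e).symm b : Fin n) : ℕ)) := by
  cases n with
  | zero => rfl
  | succ m => exact ((movesToTop_finRotate m).comap e.symm).maxCycleLen_eq G

/-- The maximum length of a monotonic cycle is invariant under cyclic rotation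
of the linear ordering: if `e : Fin n ≃ V` enumerates the vertices, then the
rotated ordering `(finRotate n).trans e` (sending position `k` to `e (k+1)`)
yields the same maximum length of a monotonic cycle. -/
theorem maxCycleLen_rotate {V : Type*} [Finite V] (G : SimpleGraph V) (n : ℕ)
    (hn : Nat.card V = n) (e : Fin n ≃ V) :
    maxCycleLen G (fun a b => ((e.symm a : Fin n) : ℕ) < ((e.symm b : Fin n) : ℕ)) =
    maxCycleLen G (fun a b => ((((finRotate n).trans e).symm a : Fin n) : ℕ) <
      ((((finRotate n).trans e).symm b : Fin n) : ℕ)) :=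
  maxCycleLen_rotate_general G n e
end

section
/- Let H be a connected finite simple graph with a cut-vertex x, let H_1, ..., H_m be the components of H − x, and for each i let H'_i be the subgraph of H induced by V(H_i) ∪ {x}. Then α°(H) = max over i of α°(H'_i). -/
open SimpleGraph

/-!
Restricting an ordering of `H` to a piece `H'_c` keeps its monotonic cycles monotonic, so
`α°(H'_c) ≤ α°(H)`. Conversely, a cycle of `H` meets `H - x` in a path, so every cycle of `H`
lies in a single piece. Given optimal orderings `g_c` of the pieces, order `V(H)` as follows:
first, piece after piece, the vertices below `x` in `g_c`, then `x`, then, piece after piece,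
the vertices above `x` in `g_c`. This ordering restricts to `g_c` on every piece, hence its
monotonic cycles have length at most `max_c α°(H'_c)`.
-/

section

variable {V : Type*}

section MonoCycle

variable (G : SimpleGraph V) (lt : V → V → Prop)

set_option linter.deprecated false in
lemma monoCycle_induce_iff (s : Set V) (l : List s) :
    MonoCycle (G.induce s) (fun a b => lt a b) l ↔ MonoCycle G lt (l.map Subtype.val) := by
  simp only [MonoCycle, List.Chain', ne_eq, List.map_eq_nil_iff,
    List.nodup_map_iff Subtype.val_injective, List.isChain_map, List.length_map,
    List.head?_map, List.getLast?_map, Option.map_eq_some_iff, comap_adj,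
    Function.Embedding.coe_subtype]
  refine and_congr_right fun _ => and_congr_right fun _ => and_congr_right fun _ =>
    imp_congr_right fun _ => and_congr_right fun _ => ⟨?_, ?_⟩
  · rintro h _ _ ⟨a, ha, rfl⟩ ⟨b, hb, rfl⟩
    exact h a b ha hb
  · exact fun h a b ha hb => h a b ⟨a, ha, rfl⟩ ⟨b, hb, rfl⟩

lemma maxCycleLen_le {n : ℕ} (h : ∀ l, MonoCycle G lt l → l.length ≤ n) :
    maxCycleLen G lt ≤ n :=
  csSup_le' fun _ ⟨l, hl, hm⟩ => hm ▸ h l hl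

lemma length_le_maxCycleLen [Finite V] {l : List V} (hl : MonoCycle G lt l) :
    l.length ≤ maxCycleLen G lt := by
  have := Fintype.ofFinite V
  exact le_csSup ⟨Fintype.card V, fun _ ⟨l, hl, hm⟩ => hm ▸ hl.2.1.length_le_card⟩
    ⟨l, hl, rfl⟩

lemma maxCycleLen_induce_le [Finite V] (s : Set V) :
    maxCycleLen (G.induce s) (fun a b => lt a b) ≤ maxCycleLen G lt :=
  maxCycleLen_le _ _ fun l hl => by
    simpa using length_le_maxCycleLen G lt ((monoCycle_induce_iff G lt s l).1 hl)

end MonoCycle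

section CircAlt

lemma exists_maxCycleLen_eq_circAlt [Countable V] (G : SimpleGraph V) :
    ∃ f : V → ℕ, Function.Injective f ∧ maxCycleLen G (fun a b => f a < f b) = circAlt G := by
  obtain ⟨f, hf⟩ := Countable.exists_injective_nat V
  exact Nat.sInf_mem (s := {n | ∃ f : V → ℕ, Function.Injective f ∧
    maxCycleLen G (fun a b => f a < f b) = n}) ⟨_, f, hf, rfl⟩

lemma circAlt_le_maxCycleLen [Finite V] {W : Type*} [LinearOrder W] (G : SimpleGraph V)
    {key : V → W} (hkey : Function.Injective key) :
    circAlt G ≤ maxCycleLen G (fun a b => key a < key b) := by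
  classical
  have := Fintype.ofFinite V
  let e := (Finset.univ.image key).orderIsoOfFin rfl
  let f : V → ℕ := fun v => e.symm ⟨key v, Finset.mem_image_of_mem key (Finset.mem_univ v)⟩
  have hf : ∀ u v, f u < f v ↔ key u < key v := fun u v => by
    simp only [f, Fin.val_fin_lt, OrderIso.lt_iff_lt, Subtype.mk_lt_mk]
  have hinj : Function.Injective f := fun u v h =>
    hkey (congrArg Subtype.val (e.symm.injective (Fin.ext h)))
  calc circAlt G ≤ maxCycleLen G (fun a b => f a < f b) := Nat.sInf_le ⟨f, hinj, rfl⟩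
    _ = maxCycleLen G (fun a b => key a < key b) := by simp only [hf]

lemma circAlt_induce_le [Finite V] (G : SimpleGraph V) (s : Set V) :
    circAlt (G.induce s) ≤ circAlt G := by
  obtain ⟨f, hf, hfG⟩ := exists_maxCycleLen_eq_circAlt G
  calc circAlt (G.induce s) ≤ maxCycleLen (G.induce s) (fun a b => f a < f b) :=
        circAlt_le_maxCycleLen _ (hf.comp Subtype.val_injective)
    _ ≤ circAlt G := hfG ▸ maxCycleLen_induce_le G (fun a b => f a < f b) s

lemma exists_injOn_maxCycleLen_induce_eq_circAlt [Countable V] (G : SimpleGraph V) (s : Set V) :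
    ∃ g : V → ℕ, Set.InjOn g s ∧
      maxCycleLen (G.induce s) (fun a b => g a < g b) = circAlt (G.induce s) := by
  classical
  obtain ⟨f, hf, hfs⟩ := exists_maxCycleLen_eq_circAlt (G.induce s)
  refine ⟨fun v => if h : v ∈ s then f ⟨v, h⟩ else 0, fun a ha b hb hab => ?_, ?_⟩
  · simpa using hf (by simpa [ha, hb] using hab : f ⟨a, ha⟩ = f ⟨b, hb⟩)
  · simpa using hfs

end CircAlt

lemma List.IsChain.reachable {G : SimpleGraph V} {l : List V} (hl : l.IsChain G.Adj)
    {u v : V} (hu : u ∈ l) (hv : v ∈ l) : G.Reachable u v := by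
  cases l with
  | nil => simp at hu
  | cons a t =>
    have h := hl.induction (G.Reachable a) _ (fun _ _ hadj hr => hr.trans hadj.reachable)
      fun _ => Reachable.refl a
    exact (h u hu).symm.trans (h v hv)

lemma reachable_induce_of_isChain {G : SimpleGraph V} {s : Set V} {l : List V}
    (hl : l.IsChain G.Adj) (hs : ∀ v ∈ l, v ∈ s) {u v : s} (hu : ↑u ∈ l) (hv : ↑v ∈ l) :
    (G.induce s).Reachable u v := by
  lift l to List s using hs
  rw [List.isChain_map] at hl
  exact hl.reachable (List.mem_map_of_injective Subtype.val_injective |>.1 hu)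
    (List.mem_map_of_injective Subtype.val_injective |>.1 hv)

lemma List.exists_infix_append_self {α : Type*} {l : List α} (hl : l.Nodup) (x : α) :
    ∃ p, p <:+: l ++ l ∧ x ∉ p ∧ ∀ v ∈ l, v ≠ x → v ∈ p := by
  by_cases hx : x ∈ l
  · obtain ⟨l₁, l₂, rfl⟩ := List.append_of_mem hx
    have hx' : x ∉ l₁ ++ l₂ := (List.nodup_cons.1 (List.nodup_middle.1 hl)).1
    refine ⟨l₂ ++ l₁, ⟨l₁ ++ [x], x :: l₂, by simp⟩, ?_, fun v hv hvx => ?_⟩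
    · simp only [List.mem_append] at hx' ⊢
      tauto
    · simp only [List.mem_append, List.mem_cons] at hv ⊢
      tauto
  · exact ⟨l, (List.prefix_append l l).isInfix, hx, fun v hv _ => hv⟩

section CutVertex

variable {H : SimpleGraph V} {lt : V → V → Prop} {l : List V}

set_option linter.deprecated false in
lemma MonoCycle.isChain_append_self (hl : MonoCycle H lt l) (h2 : 2 ≤ l.length) :
    (l ++ l).IsChain H.Adj :=
  have ⟨hchain, hclose⟩ := hl.2.2.2 h2
  List.IsChain.append hchain hchain fun b hb a ha => hclose a b ha hb

lemma MonoCycle.reachable_induce_ne {x : V} (hl : MonoCycle H lt l) {u v : {y | y ≠ x}}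
    (hu : ↑u ∈ l) (hv : ↑v ∈ l) : (H.induce {y | y ≠ x}).Reachable u v := by
  by_cases h2 : 2 ≤ l.length
  · obtain ⟨p, hp, hxp, hlp⟩ := List.exists_infix_append_self hl.2.1 x
    exact reachable_induce_of_isChain ((hl.isChain_append_self h2).infix hp)
      (fun w hw (h : w = x) => hxp (h ▸ hw)) (hlp _ hu u.2) (hlp _ hv v.2)
  · obtain ⟨a, rfl⟩ : ∃ a, l = [a] :=
      List.length_eq_one_iff.1 (by have := List.length_pos_of_ne_nil hl.1; omega)
    rw [List.mem_singleton] at hu hv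
    rw [Subtype.ext (hu.trans hv.symm)]

end CutVertex

section Pieces

variable {ι : Type*} {x : V} {idx : {y | y ≠ x} → ι}

def piece (x : V) (idx : {y | y ≠ x} → ι) (i : ι) : Set V :=
  Subtype.val '' {v | idx v = i} ∪ {x}

lemma self_mem_piece (i : ι) : x ∈ piece x idx i := Or.inr rfl

lemma mem_piece_iff {v : V} (hv : v ≠ x) {i : ι} : v ∈ piece x idx i ↔ idx ⟨v, hv⟩ = i := by
  simp [piece, hv]

lemma MonoCycle.exists_subset_piece {H : SimpleGraph V} {lt : V → V → Prop} {l : List V}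
    [Nonempty (H.induce {y | y ≠ x}).ConnectedComponent] (hl : MonoCycle H lt l) :
    ∃ c, ∀ v ∈ l, v ∈ piece x (H.induce {y | y ≠ x}).connectedComponentMk c := by
  by_cases h : ∃ u ∈ l, u ≠ x
  · obtain ⟨u, hu, hux⟩ := h
    refine ⟨(H.induce {y | y ≠ x}).connectedComponentMk ⟨u, hux⟩, fun v hv => ?_⟩
    by_cases hvx : v = x
    · exact Or.inr hvx
    · exact (mem_piece_iff hvx).2
        (ConnectedComponent.sound (hl.reachable_induce_ne (v := ⟨u, hux⟩) hv hu))
  · push Not at h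
    exact ⟨Classical.arbitrary _, fun v hv => Or.inr (h v hv)⟩

end Pieces

section Keys

variable {ι : Type*} {x : V} {idx : {y | y ≠ x} → ι} [DecidableEq V]

def sideKey (x : V) (g : V → ℕ) (n : ℕ) (v : V) : ℕ ×ₗ ℕ ×ₗ ℕ :=
  if v = x then toLex (1, toLex (0, 0)) else toLex (if g x < g v then 2 else 0, toLex (n, g v))

lemma sideKey_lt_sideKey_iff {g : V → ℕ} (n : ℕ) {u v : V} (hu : g u = g x → u = x) :
    sideKey x g n u < sideKey x g n v ↔ g u < g v := by
  by_cases hux : u = x <;> by_cases hvx : v = x <;>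
    simp only [sideKey, hux, hvx, imp_false, ite_true, ite_false] at hu ⊢ <;>
    (try split_ifs) <;> simp [Prod.Lex.toLex_lt_toLex] <;> omega

def gluedKey (x : V) (idx : {y | y ≠ x} → ι) (g : ι → V → ℕ) (e : ι → ℕ) (v : V) :
    ℕ ×ₗ ℕ ×ₗ ℕ :=
  if h : v = x then toLex (1, toLex (0, 0)) else sideKey x (g (idx ⟨v, h⟩)) (e (idx ⟨v, h⟩)) v

variable {g : ι → V → ℕ} {e : ι → ℕ}

lemma gluedKey_eq_sideKey {i : ι} {v : V} (hv : v ∈ piece x idx i) :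
    gluedKey x idx g e v = sideKey x (g i) (e i) v := by
  by_cases h : v = x
  · simp [gluedKey, sideKey, h]
  · rw [gluedKey, dif_neg h, (mem_piece_iff h).1 hv]

lemma gluedKey_eq_gluedKey_self_iff {v : V} :
    gluedKey x idx g e v = gluedKey x idx g e x ↔ v = x := by
  by_cases h : v = x
  · simp [h]
  · simp only [gluedKey, sideKey, h, dite_true, dite_false, ite_false, iff_false]
    split_ifs <;> simp

lemma gluedKey_injective (he : Function.Injective e)
    (hg : ∀ i, Set.InjOn (g i) (piece x idx i)) : Function.Injective (gluedKey x idx g e) := by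
  intro u v huv
  by_cases hu : u = x
  · subst hu
    exact (gluedKey_eq_gluedKey_self_iff.1 huv.symm).symm
  by_cases hv : v = x
  · subst hv
    exact gluedKey_eq_gluedKey_self_iff.1 huv
  simp only [gluedKey, sideKey, dif_neg hu, dif_neg hv, if_neg hu, if_neg hv, toLex_inj,
    Prod.mk.injEq] at huv
  obtain ⟨-, hidx, hguv⟩ := huv
  replace hidx := he hidx
  rw [← hidx] at hguv
  exact hg _ ((mem_piece_iff hu).2 rfl) ((mem_piece_iff hv).2 hidx.symm) hguv

end Keys

theorem circAlt_le_iSup_circAlt_piece {ι : Type*} [Finite V] [Countable ι] (G : SimpleGraph V) (x : V)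
    (idx : {y | y ≠ x} → ι)
    (hcyc : ∀ lt l, MonoCycle G lt l → ∃ i, ∀ v ∈ l, v ∈ piece x idx i) :
    circAlt G ≤ ⨆ i, circAlt (G.induce (piece x idx i)) := by
  classical
  choose g hg hgc using fun i => exists_injOn_maxCycleLen_induce_eq_circAlt G (piece x idx i)
  obtain ⟨e, he⟩ := Countable.exists_injective_nat ι
  have hbdd : BddAbove (Set.range fun i => circAlt (G.induce (piece x idx i))) :=
    ⟨circAlt G, Set.forall_mem_range.2 fun i => circAlt_induce_le G _⟩
  refine (circAlt_le_maxCycleLen G (gluedKey_injective he hg)).trans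
    (maxCycleLen_le _ _ fun l hl => ?_)
  obtain ⟨i, hi⟩ := hcyc _ l hl
  lift l to List (piece x idx i) using hi
  have hrel : (fun a b : piece x idx i => gluedKey x idx g e a < gluedKey x idx g e b) =
      fun a b : piece x idx i => g i a < g i b := by
    funext a b
    rw [gluedKey_eq_sideKey a.2, gluedKey_eq_sideKey b.2,
      sideKey_lt_sideKey_iff _ fun h => hg i a.2 (self_mem_piece i) h]
  rw [← monoCycle_induce_iff, hrel] at hl
  calc (l.map Subtype.val).length = l.length := List.length_map _
    _ ≤ maxCycleLen _ _ := length_le_maxCycleLen _ _ hl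
    _ = circAlt (G.induce (piece x idx i)) := hgc i
    _ ≤ ⨆ i, circAlt (G.induce (piece x idx i)) := le_ciSup hbdd i

end

theorem circAlt_eq_sup_cutVertex_pieces_general {V : Type*} [Finite V]
    (H : SimpleGraph V) (x : V)
    (hcut : ∃ c₁ c₂ : (H.induce {y | y ≠ x}).ConnectedComponent, c₁ ≠ c₂) :
    circAlt H = sSup {n | ∃ c : (H.induce {y | y ≠ x}).ConnectedComponent,
      circAlt (H.induce ((Subtype.val '' c.supp) ∪ {x})) = n} := by
  obtain ⟨c, -⟩ := hcut
  have : Nonempty (H.induce {y | y ≠ x}).ConnectedComponent := ⟨c⟩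
  refine le_antisymm ?_ (csSup_le ⟨_, c, rfl⟩ ?_)
  · exact circAlt_le_iSup_circAlt_piece H x _ fun _ _ hl => hl.exists_subset_piece
  · rintro n ⟨c, rfl⟩
    exact circAlt_induce_le H _

/-- Let `H` be a connected graph with a cut-vertex `x` (i.e. `H - x` has at least
two components).  For each component `c` of `H - x`, let `H'_c` be the subgraph of
`H` induced by the vertices of `c` together with `x`.  Then the circular altitude
of `H` is the maximum of the circular altitudes of the `H'_c`. -/
theorem circAlt_eq_sup_cutVertex_pieces {V : Type*} [Finite V]
    (H : SimpleGraph V) (hH : H.Connected) (x : V)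
    (hcut : ∃ c₁ c₂ : (H.induce {y | y ≠ x}).ConnectedComponent, c₁ ≠ c₂) :
    circAlt H = sSup {n | ∃ c : (H.induce {y | y ≠ x}).ConnectedComponent,
      circAlt (H.induce ((Subtype.val '' c.supp) ∪ {x})) = n} :=
  circAlt_eq_sup_cutVertex_pieces_general H x hcut
end

section
/- Let U_G and U_H be linear orderings of V(G) and V(H) respectively, and let U be the lexicographic ordering of V(G) × V(H) induced by U_G and U_H. Then every U-monotonic cycle in G □ H of length m ≥ 2 either lies entirely in a single layer {g} × V(H) and projects to a U_H-monotonic cycle of length m in H, or lies entirely in a single layer V(G) × {h} and projects to a U_G-monotonic cycle of length m in G. -/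
open SimpleGraph

/-! Along an edge of `G □ H` that goes up in the lexicographic order, both coordinates go
weakly up in rank and the one that moves goes strictly up. The closing edge from the last vertex
back to the first fixes one coordinate, so the rank of that coordinate is constant around the
cycle; hence no step of the cycle moves it, and the cycle lies in a single layer. -/

namespace List

variable {α γ δ : Type*}

theorem IsChain.imp₂ {R S T : α → α → Prop} {l : List α}
    (H : ∀ a b, R a b → S a b → T a b) (hR : l.IsChain R) (hS : l.IsChain S) : l.IsChain T :=
  isChain_iff_getElem.2 fun i hi =>
    H _ _ (isChain_iff_getElem.1 hR i hi) (isChain_iff_getElem.1 hS i hi)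

theorem IsChain.apply_eq_apply_head [PartialOrder δ] {w : α → δ} {l : List α}
    (hl : l.IsChain fun a b => w a ≤ w b) (hne : l ≠ [])
    (hlast : w (l.getLast hne) ≤ w (l.head hne)) : ∀ x ∈ l, w x = w (l.head hne) := by
  have hpw : l.Pairwise fun a b => w a ≤ w b := pairwise_map.1 ((isChain_map w).2 hl).pairwise
  intro x hx
  exact le_antisymm ((hpw.rel_getLast_of_rel_getLast_getLast hx le_rfl).trans hlast)
    (hpw.rel_head_of_rel_head_head hx le_rfl)

theorem IsChain.apply_eq_apply_head_of_isChain_eq {g : α → γ} {l : List α}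
    (hl : l.IsChain fun a b => g a = g b) (hne : l ≠ []) : ∀ x ∈ l, g x = g (l.head hne) := by
  have hpw : l.Pairwise fun a b => g a = g b := pairwise_map.1 ((isChain_map g).2 hl).pairwise
  exact fun x hx => (hpw.rel_head_of_rel_head_head hx rfl).symm

theorem IsChain.forall_eq_head_and_isChain [PartialOrder δ] {g : α → γ} {u : γ → δ}
    {R : α → α → Prop} {l : List α}
    (hl : l.IsChain fun a b => (g a = g b ∧ R a b) ∨ u (g a) < u (g b)) (hne : l ≠ [])
    (hclose : g (l.getLast hne) = g (l.head hne)) :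
    (∀ x ∈ l, g x = g (l.head hne)) ∧ l.IsChain R := by
  have hu : ∀ x ∈ l, u (g x) = u (g (l.head hne)) :=
    (hl.imp fun a b h => h.elim (fun h => (congrArg u h.1).le) le_of_lt).apply_eq_apply_head hne
      (congrArg u hclose).le
  have hsteps : l.IsChain fun a b => g a = g b ∧ R a b :=
    hl.imp_of_mem_imp fun a b ha hb h =>
      h.resolve_right (by rw [hu a ha, hu b hb]; exact lt_irrefl _)
  exact ⟨(hsteps.imp fun _ _ => And.left).apply_eq_apply_head_of_isChain_eq hne,
    hsteps.imp fun _ _ => And.right⟩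

end List

section

variable {V W δ ε : Type*}

theorem monoCycle_of_isChain [Preorder δ] (G : SimpleGraph V) {u : V → δ} {l : List V}
    (hne : l ≠ []) (hl : l.IsChain fun a b => G.Adj a b ∧ u a < u b)
    (hclose : G.Adj (l.getLast hne) (l.head hne)) : MonoCycle G (fun a b => u a < u b) l := by
  have hlt : l.IsChain fun a b => u a < u b := hl.imp fun _ _ => And.right
  have hnd : l.Nodup :=
    (List.pairwise_map.1 ((List.isChain_map u).2 hlt).pairwise).imp fun h => ne_of_apply_ne u h.ne
  refine ⟨hne, hnd, hlt, fun _ => ⟨hl.imp fun _ _ => And.left, fun a b ha hb => ?_⟩⟩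
  obtain rfl : l.head hne = a :=
    Option.some_injective _ ((List.head?_eq_some_head hne).symm.trans ha)
  obtain rfl : l.getLast hne = b :=
    Option.some_injective _ ((List.getLast?_eq_some_getLast hne).symm.trans hb)
  exact hclose

theorem SimpleGraph.boxProd_adj_of_lex [Preorder δ] [Preorder ε] {G : SimpleGraph V}
    {H : SimpleGraph W} {uG : V → δ} {uH : W → ε} {p q : V × W} (hadj : (G □ H).Adj p q)
    (hlex : uG p.1 < uG q.1 ∨ (p.1 = q.1 ∧ uH p.2 < uH q.2)) :
    (p.2 = q.2 ∧ G.Adj p.1 q.1 ∧ uG p.1 < uG q.1) ∨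
      (p.1 = q.1 ∧ H.Adj p.2 q.2 ∧ uH p.2 < uH q.2) := by
  rcases boxProd_adj.1 hadj with ⟨hG, h2⟩ | ⟨hH, h1⟩
  · exact .inl ⟨h2, hG, hlex.resolve_right fun h => hG.ne h.1⟩
  · refine .inr ⟨h1, hH, hlex.resolve_left ?_ |>.2⟩
    rw [h1]
    exact lt_irrefl _

end

theorem monoCycle_boxProd_lex_general {V W : Type*} (G : SimpleGraph V) (H : SimpleGraph W)
    (uG : V → ℕ) (uH : W → ℕ)
    (l : List (V × W))
    (hl : MonoCycle (G.boxProd H)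
      (fun p q => uG p.1 < uG q.1 ∨ (p.1 = q.1 ∧ uH p.2 < uH q.2)) l)
    (h2 : 2 ≤ l.length) :
    (∃ g : V, (∀ p ∈ l, p.1 = g) ∧
      MonoCycle H (fun a b => uH a < uH b) (l.map Prod.snd)) ∨
    (∃ h : W, (∀ p ∈ l, p.2 = h) ∧
      MonoCycle G (fun a b => uG a < uG b) (l.map Prod.fst)) := by
  obtain ⟨hne, -, hlex, hcyc⟩ := hl
  obtain ⟨hadj, hclose⟩ := hcyc h2
  have hsteps := List.IsChain.imp₂ (fun _ _ => boxProd_adj_of_lex) hadj hlex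
  have hcloseAdj := hclose _ _ (List.head?_eq_some_head hne) (List.getLast?_eq_some_getLast hne)
  rcases boxProd_adj.1 hcloseAdj with ⟨hG, hsnd⟩ | ⟨hH, hfst⟩
  · obtain ⟨hconst, hchain⟩ := (hsteps.imp fun _ _ h => h.imp_right fun h => h.2.2)
      |>.forall_eq_head_and_isChain (R := fun p q => G.Adj p.1 q.1 ∧ uG p.1 < uG q.1) hne hsnd
    refine .inr ⟨_, hconst, monoCycle_of_isChain G (List.map_eq_nil_iff.not.2 hne)
      ((List.isChain_map _).2 hchain) ?_⟩
    simpa only [List.head_map, List.getLast_map] using hG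
  · obtain ⟨hconst, hchain⟩ := (hsteps.imp fun _ _ h => (h.imp_left fun h => h.2.2).symm)
      |>.forall_eq_head_and_isChain (R := fun p q => H.Adj p.2 q.2 ∧ uH p.2 < uH q.2) hne hfst
    refine .inl ⟨_, hconst, monoCycle_of_isChain H (List.map_eq_nil_iff.not.2 hne)
      ((List.isChain_map _).2 hchain) ?_⟩
    simpa only [List.head_map, List.getLast_map] using hH

/-- With the lexicographic ordering on `V(G) × V(H)` induced by orderings `uG`
and `uH`, every monotonic cycle of length at least 2 in `G □ H` lies entirely in
a single layer `{g} × V(H)` and projects to a `uH`-monotonic cycle in `H`, or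
lies entirely in a single layer `V(G) × {h}` and projects to a `uG`-monotonic
cycle in `G` (the projections have the same length `m` as the cycle). -/
theorem monoCycle_boxProd_lex {V W : Type*} (G : SimpleGraph V) (H : SimpleGraph W)
    (uG : V → ℕ) (uH : W → ℕ)
    (hG : Function.Injective uG) (hH : Function.Injective uH)
    (l : List (V × W))
    (hl : MonoCycle (G.boxProd H)
      (fun p q => uG p.1 < uG q.1 ∨ (p.1 = q.1 ∧ uH p.2 < uH q.2)) l)
    (h2 : 2 ≤ l.length) :
    (∃ g : V, (∀ p ∈ l, p.1 = g) ∧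
      MonoCycle H (fun a b => uH a < uH b) (l.map Prod.snd)) ∨
    (∃ h : W, (∀ p ∈ l, p.2 = h) ∧
      MonoCycle G (fun a b => uG a < uG b) (l.map Prod.fst)) :=
  monoCycle_boxProd_lex_general G H uG uH l hl h2
end
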